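/- For L > 0 and n ∈ ℤ define ψ_n^L(x) := (2L)^{−1/2}·χ_{[−L,L]}(x)·e^{iπnx/L}, and let 𝓕ψ_n^L be its Fourier transform, (𝓕ψ_n^L)(k) = (2π)^{−1/2} ∫_ℝ e^{−ikx} ψ_n^L(x) dx. Then for every ε ≥ 0 and every L > 0 one has (1/(2L))·∑_{n∈ℤ} ∫_0^ε |(𝓕ψ_n^L)(k)|² dk = ε/(2π). Equivalently, the local density of states of the momentum operator p = −i d/dx on [−L, L] equals the constant 1/(2π), so the integrated density of states is 𝒩^p_L(ε) = ε/(2π) independently of L. -/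

import Mathlib

/-!
For fixed `k`, `𝓕ψ_n^L(k)` is `√(L/π)` times the `(-n)`-th Fourier coefficient on `[-L, L]` of
the unimodular function `x ↦ e^{-ikx}`, so Parseval's identity gives `∑ₙ |𝓕ψ_n^L(k)|² = L/π` for
every `k`. The terms being nonnegative, the sum may be integrated termwise over `[0, ε]`.
-/

open MeasureTheory

/-- The local Fourier basis function `ψ_n^L(x) = (2L)^{-1/2} χ_{[-L,L]}(x) e^{iπnx/L}`. -/
noncomputable def psiL (L : ℝ) (n : ℤ) (x : ℝ) : ℂ :=
  ((Real.sqrt (2 * L))⁻¹ : ℝ) * (if x ∈ Set.Icc (-L) L then (1 : ℂ) else 0) *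
    Complex.exp (Complex.I * Real.pi * (n : ℂ) * (x : ℂ) / (L : ℂ))

/-- Its Fourier transform `(𝓕ψ_n^L)(k) = (2π)^{-1/2} ∫ e^{-ikx} ψ_n^L(x) dx`. -/
noncomputable def psiLhat (L : ℝ) (n : ℤ) (k : ℝ) : ℂ :=
  ((Real.sqrt (2 * Real.pi))⁻¹ : ℝ) *
    ∫ x : ℝ, Complex.exp (-Complex.I * (k : ℂ) * (x : ℂ)) * psiL L n x

open Complex

theorem hasSum_intervalIntegral_of_hasSum_const {ι : Type*} [Countable ι] {f : ι → ℝ → ℝ}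
    (hf_meas : ∀ i, AEStronglyMeasurable (f i)) (hf_nonneg : ∀ i x, 0 ≤ f i x) {c : ℝ}
    (hf_sum : ∀ x, HasSum (fun i => f i x) c) (a b : ℝ) :
    HasSum (fun i => ∫ x in a..b, f i x) ((b - a) * c) := by
  have h := intervalIntegral.hasSum_integral_of_dominated_convergence (a := a) (b := b)
    (μ := volume) (f := fun _ => c) f (fun i => (hf_meas i).restrict)
    (fun i => .of_forall fun x _ => (Real.norm_of_nonneg (hf_nonneg i x)).le)
    (.of_forall fun x _ => (hf_sum x).summable)
    (by simp_rw [(hf_sum _).tsum_eq]; exact intervalIntegrable_const)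
    (.of_forall fun x _ => hf_sum x)
  simpa using h

theorem measurable_psiL (L : ℝ) (n : ℤ) : Measurable (psiL L n) := by
  unfold psiL
  exact (measurable_const.mul (Measurable.ite measurableSet_Icc measurable_const
    measurable_const)).mul (by fun_prop)

theorem stronglyMeasurable_psiLhat (L : ℝ) (n : ℤ) : StronglyMeasurable (psiLhat L n) := by
  refine stronglyMeasurable_const.mul (StronglyMeasurable.integral_prod_right'
    (f := fun p : ℝ × ℝ => exp (-I * p.1 * p.2) * psiL L n p.2) ?_)
  exact ((by fun_prop : Measurable fun p : ℝ × ℝ => exp (-I * p.1 * p.2)).mul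
    ((measurable_psiL L n).comp measurable_snd)).stronglyMeasurable

theorem integral_exp_mul_psiL {L : ℝ} (hL : 0 ≤ L) (n : ℤ) (k : ℝ) :
    ∫ x : ℝ, exp (-I * k * x) * psiL L n x =
      ((Real.sqrt (2 * L))⁻¹ : ℝ) * ∫ x in (-L)..L,
        exp (I * Real.pi * n * x / L) * exp (-I * k * x) := by
  have h : (fun x : ℝ => exp (-I * k * x) * psiL L n x) =
      (Set.Icc (-L) L).indicator fun x => ((Real.sqrt (2 * L))⁻¹ : ℝ) *
        (exp (I * Real.pi * n * x / L) * exp (-I * k * x)) := by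
    ext x
    unfold psiL
    split_ifs with hx <;> simp [hx]; ring
  rw [h, integral_indicator measurableSet_Icc, integral_Icc_eq_integral_Ioc,
    ← intervalIntegral.integral_of_le (by linarith), intervalIntegral.integral_const_mul]

theorem fourierCoeffOn_exp_neg {L : ℝ} (hL : 0 < L) (n : ℤ) (k : ℝ) :
    fourierCoeffOn (neg_lt_self hL) (fun x : ℝ => exp (-I * k * x)) (-n) =
      ((2 * L)⁻¹ : ℝ) * ∫ x in (-L)..L,
        exp (I * Real.pi * n * x / L) * exp (-I * k * x) := by
  rw [fourierCoeffOn_eq_integral, sub_neg_eq_add, ← two_mul, real_smul, one_div,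
    neg_neg]
  congr 1
  refine intervalIntegral.integral_congr fun x _ => ?_
  rw [fourier_coe_apply, smul_eq_mul]
  congr 2
  field_simp
  push_cast
  ring

theorem hasSum_sq_fourierCoeffOn_of_norm_eq_one {a b : ℝ} (hab : a < b) {f : ℝ → ℂ}
    (hf_meas : AEStronglyMeasurable f (volume.restrict (Set.Ioc a b))) (hf : ∀ x, ‖f x‖ = 1) :
    HasSum (fun i => ‖fourierCoeffOn hab f i‖ ^ 2) 1 := by
  have hL2 : MemLp f 2 (volume.restrict (Set.Ioc a b)) :=
    .of_bound hf_meas 1 (.of_forall fun x => (hf x).le)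
  convert hasSum_sq_fourierCoeffOn hab hL2
  simp [hf, (sub_pos.2 hab).ne']

theorem norm_sq_psiLhat {L : ℝ} (hL : 0 < L) (n : ℤ) (k : ℝ) :
    ‖psiLhat L n k‖ ^ 2 =
      L / Real.pi * ‖fourierCoeffOn (neg_lt_self hL) (fun x : ℝ => exp (-I * k * x)) (-n)‖ ^ 2 := by
  rw [psiLhat, integral_exp_mul_psiL hL.le, fourierCoeffOn_exp_neg hL]
  generalize (∫ x in (-L)..L, _ : ℂ) = J
  simp only [norm_mul, mul_pow, norm_real, Real.norm_eq_abs, sq_abs, inv_pow,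
    Real.sq_sqrt (by positivity : (0 : ℝ) ≤ 2 * Real.pi),
    Real.sq_sqrt (by positivity : (0 : ℝ) ≤ 2 * L)]
  field_simp

theorem hasSum_norm_sq_psiLhat {L : ℝ} (hL : 0 < L) (k : ℝ) :
    HasSum (fun n : ℤ => ‖psiLhat L n k‖ ^ 2) (L / Real.pi) := by
  have h := hasSum_sq_fourierCoeffOn_of_norm_eq_one (neg_lt_self hL)
    (f := fun x : ℝ => exp (-I * k * x)) (by fun_prop)
    (fun x => by simp [norm_exp])
  simpa only [norm_sq_psiLhat hL, mul_one, Function.comp_def, Equiv.neg_apply] using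
    ((Equiv.neg ℤ).hasSum_iff.2 h).mul_left (L / Real.pi)

theorem IDOS_momentum_general (L : ℝ) (hL : 0 < L) (ε : ℝ) :
    (1 / (2 * L)) * ∑' n : ℤ, (∫ k in (0 : ℝ)..ε, ‖psiLhat L n k‖ ^ 2)
      = ε / (2 * Real.pi) := by
  have h := hasSum_intervalIntegral_of_hasSum_const (f := fun n k => ‖psiLhat L n k‖ ^ 2)
    (fun n => ((stronglyMeasurable_psiLhat L n).measurable.norm.pow_const 2).aestronglyMeasurable)
    (fun _ _ => by positivity) (hasSum_norm_sq_psiLhat hL) 0 ε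
  rw [h.tsum_eq, sub_zero]
  field_simp

/-- the integrated density of states of the momentum operator on `[-L,L]`
is `𝒩^p_L(ε) = ε/(2π)`, independently of `L`:
`(1/(2L)) ∑_{n ∈ ℤ} ∫_0^ε |(𝓕ψ_n^L)(k)|² dk = ε/(2π)`. -/
theorem IDOS_momentum (L : ℝ) (hL : 0 < L) (ε : ℝ) (hε : 0 ≤ ε) :
    (1 / (2 * L)) * ∑' n : ℤ, (∫ k in (0 : ℝ)..ε, ‖psiLhat L n k‖ ^ 2)
      = ε / (2 * Real.pi) :=
  IDOS_momentum_general L hL ε
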